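/- Let ν > 0, L_p > 0, θ = L_p/ν, let k ≥ 1 be an integer, and let s_1, ..., s_{k+1} be i.i.d. exponential random variables with mean ν, S_k = s_1 + ... + s_k. Define V_k = (L_p - S_k)/s_{k+1} and let A_k be the event {S_k ≤ L_p < S_{k+1}} (equivalently, S_k < L_p and V_k < 1). Then for every x with 0 < x < 1, P(V_k ≤ x | A_k) = (k/L_p) ∫_0^{L_p} ((L_p - u)/L_p)^{k-1} e^{ (u/ν)(1 - 1/x) } du. -/

import Mathlib

/-!
Since the `s i` are independent and exponential with rate `r = 1/ν`, the partial sum `S_k` is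
`Gamma(k, r)`-distributed and independent of `s_{k+1}`. Given `S_k = u ∈ [0, L_p]`, the event
`A_k ∩ {V_k ≤ x}` is `{s_{k+1} ≥ (L_p - u)/x}` up to a null set, of probability
`exp (-r (L_p - u)/x)`, and for `x = 1` it is `A_k` itself. Integrating against the Gamma
density gives both probabilities with the common factor `r^k e^{-r L_p}/(k-1)!`, which cancels
in the quotient; the substitution `u ↦ L_p - u` then yields the stated formula.
-/

open MeasureTheory ProbabilityTheory Real Set
open scoped ENNReal Nat

lemma lintegral_indicator_Icc_ofReal {f : ℝ → ℝ} {a b : ℝ} (hab : a ≤ b)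
    (hf : IntegrableOn f (Icc a b)) (hf0 : ∀ u ∈ Icc a b, 0 ≤ f u) :
    ∫⁻ u, (Icc a b).indicator (fun u ↦ ENNReal.ofReal (f u)) u =
      ENNReal.ofReal (∫ u in a..b, f u) := by
  rw [lintegral_indicator measurableSet_Icc, ← ofReal_integral_eq_lintegral_ofReal hf
    ((ae_restrict_iff' measurableSet_Icc).2 (.of_forall hf0)), integral_Icc_eq_integral_Ioc,
    intervalIntegral.integral_of_le hab]

lemma integral_pow_mul_exp_sub_mul {L : ℝ} (hL : L ≠ 0) (a : ℝ) (n : ℕ) :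
    ∫ u in 0..L, u ^ n * exp ((L - u) * a) =
      L ^ n * ∫ u in 0..L, ((L - u) / L) ^ n * exp (u * a) := by
  have hreflect := intervalIntegral.integral_comp_sub_left (a := 0) (b := L)
    (fun v ↦ v ^ n * exp ((L - v) * a)) L
  simp only [sub_sub_cancel, sub_self, sub_zero] at hreflect
  rw [← hreflect, ← intervalIntegral.integral_const_mul]
  congr 1 with u
  rw [div_pow, ← mul_assoc, mul_div_cancel₀ _ (pow_ne_zero n hL)]

namespace ProbabilityTheory

lemma gammaPDFReal_natCast_add_one (n : ℕ) {r u : ℝ} (hu : 0 ≤ u) :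
    gammaPDFReal (n + 1) r u = r ^ (n + 1) / n ! * u ^ n * exp (-(r * u)) := by
  rw [gammaPDFReal, if_pos hu, add_sub_cancel_right, Gamma_nat_eq_factorial, rpow_natCast,
    ← Nat.cast_succ, rpow_natCast]

lemma gammaPDF_lconvolution_exponentialPDF {r : ℝ} (hr : 0 < r) (n : ℕ) :
    gammaPDF (n + 1) r ⋆ₗ exponentialPDF r = gammaPDF (n + 1 + 1) r := by
  funext w
  have hpt : ∀ y, gammaPDF (n + 1) r y * exponentialPDF r (-y + w) = (Icc 0 w).indicator
      (fun y ↦ ENNReal.ofReal (r ^ (n + 1 + 1) / n ! * exp (-(r * w)) * y ^ n)) y := by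
    intro y
    by_cases hy : y ∈ Icc 0 w
    · rw [indicator_of_mem hy, gammaPDF, exponentialPDF_of_nonneg (by linarith [hy.2]),
        ← ENNReal.ofReal_mul (gammaPDFReal_nonneg (by positivity) hr y),
        gammaPDFReal_natCast_add_one n hy.1]
      congr 1
      rw [show -(r * w) = -(r * y) + -(r * (-y + w)) by ring, exp_add]
      ring
    · rw [indicator_of_notMem hy]
      rcases not_and_or.1 hy with hy | hy
      · rw [gammaPDF_of_neg (not_le.1 hy), zero_mul]
      · rw [exponentialPDF_of_neg (by linarith [not_le.1 hy]), mul_zero]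
  rw [lconvolution_def, lintegral_congr hpt]
  rcases lt_or_ge w 0 with hw | hw
  · rw [Icc_eq_empty (by linarith), indicator_empty, lintegral_zero, gammaPDF_of_neg hw]
  rw [lintegral_indicator_Icc_ofReal hw (Continuous.integrableOn_Icc (by fun_prop))
    (fun y hy ↦ by have := hy.1; positivity), gammaPDF, ← Nat.cast_succ,
    gammaPDFReal_natCast_add_one (n + 1) hw, intervalIntegral.integral_const_mul, integral_pow,
    Nat.factorial_succ]
  congr 1
  push_cast
  field_simp
  ring

lemma gammaMeasure_conv_expMeasure {r : ℝ} (hr : 0 < r) (n : ℕ) :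
    gammaMeasure (n + 1) r ∗ expMeasure r = gammaMeasure (n + 1 + 1) r := by
  change volume.withDensity _ ∗ volume.withDensity (exponentialPDF r) = _
  rw [conv_withDensity_eq_lconvolution (f := gammaPDF (n + 1) r) (g := exponentialPDF r)
    (measurable_gammaPDFReal _ _).ennreal_ofReal (measurable_exponentialPDFReal _).ennreal_ofReal,
    gammaPDF_lconvolution_exponentialPDF hr n, gammaMeasure]

instance (a r : ℝ) : NullSingletonClass (gammaMeasure a r) :=
  inferInstanceAs (NullSingletonClass (volume.withDensity (gammaPDF a r)))

instance (r : ℝ) : NullSingletonClass (expMeasure r) :=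
  inferInstanceAs (NullSingletonClass (gammaMeasure 1 r))

lemma expMeasure_Ici {r t : ℝ} (hr : 0 < r) (ht : 0 ≤ t) :
    expMeasure r (Ici t) = ENNReal.ofReal (exp (-(r * t))) := by
  have := isProbabilityMeasure_expMeasure hr
  rw [← measure_congr Ioi_ae_eq_Ici, ← compl_Iic, prob_compl_eq_one_sub measurableSet_Iic,
    ← ofReal_cdf, cdf_expMeasure_eq hr, if_pos ht, ← ENNReal.ofReal_one,
    ← ENNReal.ofReal_sub _ (sub_nonneg.2 (exp_le_one_iff.2 (by nlinarith))), sub_sub_cancel]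

lemma cond_preimage {Ω α : Type*} [MeasurableSpace Ω] [MeasurableSpace α] {μ : Measure Ω}
    {f : Ω → α} (hf : Measurable f) {A B : Set α} (hA : MeasurableSet A) (hB : MeasurableSet B) :
    μ[|f ⁻¹' A] (f ⁻¹' B) = (μ.map f)[|A] B := by
  rw [cond_apply (hf hA), cond_apply hA, ← preimage_inter, Measure.map_apply hf hA,
    Measure.map_apply hf (hA.inter hB)]

section PartialSums

variable {Ω : Type*} [MeasurableSpace Ω] {μ : Measure Ω} {r : ℝ} {s : ℕ → Ω → ℝ}

lemma iIndepFun.map_sum_range_eq_gammaMeasure (hr : 0 < r) (hmeas : ∀ n, Measurable (s n))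
    (hindep : iIndepFun s μ) (hdist : ∀ n, μ.map (s n) = expMeasure r) (n : ℕ) :
    μ.map (∑ i ∈ Finset.range (n + 1), s i) = gammaMeasure (n + 1) r := by
  have := hindep.isProbabilityMeasure
  induction n with
  | zero => simpa [expMeasure] using hdist 0
  | succ n ih =>
    rw [Finset.sum_range_succ,
      (hindep.indepFun_sum_range_succ hmeas (n + 1)).map_add_eq_map_conv_map (by fun_prop)
        (hmeas _), ih, hdist, gammaMeasure_conv_expMeasure hr, Nat.cast_succ]

lemma iIndepFun.map_sum_range_prodMk_eq_prod (hr : 0 < r) (hmeas : ∀ n, Measurable (s n))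
    (hindep : iIndepFun s μ) (hdist : ∀ n, μ.map (s n) = expMeasure r) (n : ℕ) :
    μ.map (fun ω ↦ (∑ i ∈ Finset.range (n + 1), s i ω, s (n + 1) ω)) =
      (gammaMeasure (n + 1) r).prod (expMeasure r) := by
  have := hindep.isProbabilityMeasure
  have hsum : Measurable (∑ i ∈ Finset.range (n + 1), s i) := by fun_prop
  simp_rw [← Finset.sum_apply]
  rw [(indepFun_iff_map_prod_eq_prod_map_map hsum.aemeasurable (hmeas _).aemeasurable).1
    (hindep.indepFun_sum_range_succ hmeas (n + 1)),
    hindep.map_sum_range_eq_gammaMeasure hr hmeas hdist, hdist]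

end PartialSums

/-- The event `A_k ∩ {V_k ≤ x}`, as a set of values of `(S_k, s_{k+1})`. -/
def vestigeEvent (L x : ℝ) : Set (ℝ × ℝ) :=
  {p | p.1 ≤ L ∧ L < p.1 + p.2 ∧ (L - p.1) / p.2 ≤ x}

lemma measurableSet_vestigeEvent (L x : ℝ) : MeasurableSet (vestigeEvent L x) :=
  (measurableSet_le measurable_fst measurable_const).inter <|
    (measurableSet_lt measurable_const (measurable_fst.add measurable_snd)).inter <|
      measurableSet_le ((measurable_const.sub measurable_fst).div measurable_snd) measurable_const

lemma vestigeEvent_mono (L : ℝ) : Monotone (vestigeEvent L) :=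
  fun _ _ hxy _ ⟨h1, h2, h3⟩ ↦ ⟨h1, h2, h3.trans hxy⟩

lemma vestigeEvent_one (L : ℝ) : vestigeEvent L 1 = {p | p.1 ≤ L ∧ L < p.1 + p.2} := by
  ext p
  refine ⟨fun h ↦ ⟨h.1, h.2.1⟩, fun ⟨h1, h2⟩ ↦ ⟨h1, h2, ?_⟩⟩
  rw [div_le_one (by linarith)]
  linarith

section VestigeEvent

variable {L x u : ℝ}

lemma Ioi_subset_preimage_vestigeEvent (hu : u ≤ L) (hx0 : 0 < x) (hx1 : x ≤ 1) :
    Ioi ((L - u) / x) ⊆ Prod.mk u ⁻¹' vestigeEvent L x := by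
  intro v hv
  have hLu : L - u ≤ (L - u) / x := le_div_self (by linarith) hx0 hx1
  have hv0 : 0 < v := by linarith [mem_Ioi.1 hv, div_nonneg (sub_nonneg.2 hu) hx0.le]
  refine ⟨hu, by linarith [mem_Ioi.1 hv], ?_⟩
  rw [div_le_iff₀ hv0]
  rw [mem_Ioi, div_lt_iff₀ hx0] at hv
  linarith

lemma preimage_vestigeEvent_subset_Ici (hx0 : 0 < x) :
    Prod.mk u ⁻¹' vestigeEvent L x ⊆ Ici ((L - u) / x) := by
  rintro v ⟨hu, hsum, hle⟩
  have hv0 : 0 < v := by linarith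
  rw [div_le_iff₀ hv0] at hle
  rw [mem_Ici, div_le_iff₀ hx0]
  linarith

lemma preimage_vestigeEvent_eq_empty (hLu : L < u) : Prod.mk u ⁻¹' vestigeEvent L x = ∅ :=
  eq_empty_of_forall_notMem fun _ hv ↦ (not_le.2 hLu) hv.1

lemma expMeasure_preimage_vestigeEvent {r : ℝ} (hr : 0 < r) (hu : u ≤ L) (hx0 : 0 < x)
    (hx1 : x ≤ 1) :
    expMeasure r (Prod.mk u ⁻¹' vestigeEvent L x) =
      ENNReal.ofReal (exp (-(r * ((L - u) / x)))) := by
  rw [← expMeasure_Ici hr (div_nonneg (sub_nonneg.2 hu) hx0.le)]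
  exact le_antisymm (measure_mono (preimage_vestigeEvent_subset_Ici hx0))
    ((measure_congr Ioi_ae_eq_Ici).symm.le.trans
      (measure_mono (Ioi_subset_preimage_vestigeEvent hu hx0 hx1)))

lemma gammaMeasure_prod_expMeasure_vestigeEvent {r : ℝ} (hr : 0 < r) (n : ℕ) (hL : 0 ≤ L)
    (hx0 : 0 < x) (hx1 : x ≤ 1) :
    (gammaMeasure (n + 1) r).prod (expMeasure r) (vestigeEvent L x) =
      ENNReal.ofReal (r ^ (n + 1) / n ! * exp (-(r * L)) *
        ∫ u in 0..L, u ^ n * exp ((L - u) * (r * (1 - 1 / x)))) := by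
  have hpt : ∀ u, gammaPDF (n + 1) r u * expMeasure r (Prod.mk u ⁻¹' vestigeEvent L x) =
      (Icc 0 L).indicator (fun u ↦ ENNReal.ofReal (r ^ (n + 1) / n ! * exp (-(r * L)) *
        (u ^ n * exp ((L - u) * (r * (1 - 1 / x)))))) u := by
    intro u
    by_cases hu : u ∈ Icc 0 L
    · rw [indicator_of_mem hu, expMeasure_preimage_vestigeEvent hr hu.2 hx0 hx1, gammaPDF,
        ← ENNReal.ofReal_mul (gammaPDFReal_nonneg (by positivity) hr u),
        gammaPDFReal_natCast_add_one n hu.1]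
      congr 1
      have hexp : exp (-(r * u)) * exp (-(r * ((L - u) / x))) =
          exp (-(r * L)) * exp ((L - u) * (r * (1 - 1 / x))) := by
        rw [← exp_add, ← exp_add]
        ring_nf
      linear_combination (r ^ (n + 1) / n ! * u ^ n) * hexp
    · rw [indicator_of_notMem hu]
      rcases not_and_or.1 hu with hu | hu
      · rw [gammaPDF_of_neg (not_le.1 hu), zero_mul]
      · rw [preimage_vestigeEvent_eq_empty (not_le.1 hu), measure_empty, mul_zero]
  have := isProbabilityMeasure_expMeasure hr
  rw [Measure.prod_apply (measurableSet_vestigeEvent L x), gammaMeasure,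
    lintegral_withDensity_eq_lintegral_mul _ (f := gammaPDF (n + 1) r)
      (measurable_gammaPDFReal _ _).ennreal_ofReal
      (measurable_measure_prodMk_left (measurableSet_vestigeEvent L x))]
  simp only [Pi.mul_apply]
  rw [lintegral_congr hpt, lintegral_indicator_Icc_ofReal hL
    (Continuous.integrableOn_Icc (by fun_prop)) (fun u hu ↦ by have := hu.1; positivity),
    intervalIntegral.integral_const_mul]

lemma cond_vestigeEvent {r : ℝ} (hr : 0 < r) (n : ℕ) (hL : 0 < L) (hx0 : 0 < x)
    (hx1 : x ≤ 1) :
    ((gammaMeasure (n + 1) r).prod (expMeasure r))[|vestigeEvent L 1] (vestigeEvent L x) =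
      ENNReal.ofReal ((n + 1) / L *
        ∫ u in 0..L, ((L - u) / L) ^ n * exp (u * (r * (1 - 1 / x)))) := by
  have hden : ∫ u in 0..L, u ^ n * exp ((L - u) * (r * (1 - 1 / 1))) = L ^ (n + 1) / (n + 1) := by
    simp [integral_pow]
  rw [cond_apply (measurableSet_vestigeEvent L 1), inter_eq_right.2 (vestigeEvent_mono L hx1),
    gammaMeasure_prod_expMeasure_vestigeEvent hr n hL.le hx0 hx1,
    gammaMeasure_prod_expMeasure_vestigeEvent hr n hL.le one_pos le_rfl, hden,
    integral_pow_mul_exp_sub_mul hL.ne', ← ENNReal.ofReal_inv_of_pos (by positivity),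
    ← ENNReal.ofReal_mul (by positivity)]
  generalize ∫ u in 0..L, ((L - u) / L) ^ n * exp (u * (r * (1 - 1 / x))) = J
  congr 1
  field_simp
  ring

end VestigeEvent

end ProbabilityTheory

/-- `s` is `0`-indexed: `s_{k+1}` is `s k` and `S_k = Σ_{i<k} s_i`. -/
theorem vestige_Vk_conditional_cdf_given_Ak_general
    {Ω : Type*} [MeasurableSpace Ω] (μ : Measure Ω)
    (ν Lp : ℝ) (hν : 0 < ν) (hLp : 0 < Lp)
    (k : ℕ) (hk : 1 ≤ k)
    (s : ℕ → Ω → ℝ) (hmeas : ∀ n, Measurable (s n))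
    (hindep : iIndepFun s μ)
    (hdist : ∀ n, Measure.map (s n) μ = expMeasure (1 / ν))
    (S : ℕ → Ω → ℝ) (hS : ∀ m ω, S m ω = ∑ i ∈ Finset.range m, s i ω)
    (V : ℕ → Ω → ℝ) (hV : ∀ m ω, V m ω = (Lp - S m ω) / s m ω) :
    ∀ x : ℝ, 0 < x → x < 1 →
      μ[|{ω | S k ω ≤ Lp ∧ Lp < S (k + 1) ω}] {ω | V k ω ≤ x} =
        ENNReal.ofReal ((k / Lp) *
          ∫ u in (0 : ℝ)..Lp, ((Lp - u) / Lp) ^ (k - 1) *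
            Real.exp ((u / ν) * (1 - 1 / x))) := by
  intro x hx0 hx1
  obtain ⟨n, rfl⟩ : ∃ n, k = n + 1 := ⟨k - 1, by omega⟩
  have hr : 0 < 1 / ν := by positivity
  set pair : Ω → ℝ × ℝ := fun ω ↦ (S (n + 1) ω, s (n + 1) ω)
  have hpair : Measurable pair := by simp only [pair, hS]; fun_prop
  have hlaw : μ.map pair = (gammaMeasure (n + 1) (1 / ν)).prod (expMeasure (1 / ν)) := by
    simp only [pair, hS]
    exact hindep.map_sum_range_prodMk_eq_prod hr hmeas hdist n
  have hSsucc : ∀ ω, S (n + 1 + 1) ω = S (n + 1) ω + s (n + 1) ω := by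
    simp [hS, Finset.sum_range_succ]
  have hA : {ω | S (n + 1) ω ≤ Lp ∧ Lp < S (n + 1 + 1) ω} = pair ⁻¹' vestigeEvent Lp 1 := by
    ext ω
    simp [vestigeEvent_one, pair, hSsucc]
  have hAV : {ω | S (n + 1) ω ≤ Lp ∧ Lp < S (n + 1 + 1) ω} ∩ {ω | V (n + 1) ω ≤ x} =
      pair ⁻¹' vestigeEvent Lp x := by
    ext ω
    simp [vestigeEvent, pair, hSsucc, hV, and_assoc]
  rw [← cond_inter_self (hA ▸ hpair (measurableSet_vestigeEvent _ _)), hAV, hA,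
    cond_preimage hpair (measurableSet_vestigeEvent _ _) (measurableSet_vestigeEvent _ _), hlaw,
    cond_vestigeEvent hr n hLp hx0 hx1.le]
  push_cast
  simp_rw [← mul_assoc, mul_one_div]

/-- Conditional CDF of the vestige time `V_k = (L_p - S_k)/s_{k+1}` given the event
`A_k = {S_k ≤ L_p < S_{k+1}}`: for `0 < x < 1`,
`P(V_k ≤ x | A_k) = (k/L_p) ∫_0^{L_p} ((L_p-u)/L_p)^{k-1} e^{(u/ν)(1-1/x)} du`.
Here `s` is `0`-indexed, so `s_{k+1}` is `s k` and `S_k = Σ_{i<k} s_i`. -/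
theorem vestige_Vk_conditional_cdf_given_Ak
    {Ω : Type*} [MeasurableSpace Ω] (μ : Measure Ω) [IsProbabilityMeasure μ]
    (ν Lp θ : ℝ) (hν : 0 < ν) (hLp : 0 < Lp) (hθ : θ = Lp / ν)
    (k : ℕ) (hk : 1 ≤ k)
    (s : ℕ → Ω → ℝ) (hmeas : ∀ n, Measurable (s n))
    (hindep : iIndepFun s μ)
    (hdist : ∀ n, Measure.map (s n) μ = expMeasure (1 / ν))
    (S : ℕ → Ω → ℝ) (hS : ∀ m ω, S m ω = ∑ i ∈ Finset.range m, s i ω)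
    (V : ℕ → Ω → ℝ) (hV : ∀ m ω, V m ω = (Lp - S m ω) / s m ω) :
    ∀ x : ℝ, 0 < x → x < 1 →
      μ[|{ω | S k ω ≤ Lp ∧ Lp < S (k + 1) ω}] {ω | V k ω ≤ x} =
        ENNReal.ofReal ((k / Lp) *
          ∫ u in (0 : ℝ)..Lp, ((Lp - u) / Lp) ^ (k - 1) *
            Real.exp ((u / ν) * (1 - 1 / x))) :=
  vestige_Vk_conditional_cdf_given_Ak_general μ ν Lp hν hLp k hk s hmeas hindep hdist S hS V hV
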